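/- arXiv:2001.03969 — 7 statements merged into one kernel-verified Lean document; each statement's English description precedes it below -/
import Mathlib

section
/- For σ > 0 and β < 0, the energy E(ω) = ((σ(log(√ω/2)+γ))/(2π(σ+1)) - 1/(4π)) · (-(log(√ω/2)+γ)/(2πβ))^(1/σ) on (ω̃, +∞), where ω̃ = 4e^(-2γ), attains its global minimum at ω̄ = 4 exp(-2γ + 1/σ), with minimum value E(ω̄) = -σ/(4π(σ+1)(-4πσβ)^(1/σ)). -/
noncomputable section
open Real Filter Set Topology

/-- The Euler–Mascheroni constant. -/
def euγ : ℝ := Real.eulerMascheroniConstant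

/-- The threshold frequency. -/
def ωtilde : ℝ := 4 * Real.exp (-2 * euγ)

/-- The charge of the standing wave at frequency ω. -/
def charge (σ β ω : ℝ) : ℝ :=
  (-(Real.log (Real.sqrt ω / 2) + euγ) / (2 * π * β)) ^ (1 / (2 * σ))

/-- The inverse change of variables, frequency as a function of the charge. -/
def ωof (σ β q : ℝ) : ℝ := 4 * Real.exp (-2 * euγ - 4 * π * β * q ^ (2 * σ))

/-- Energy of the standing wave as a function of the frequency. -/
def Eω (σ β ω : ℝ) : ℝ :=
  (σ * (Real.log (Real.sqrt ω / 2) + euγ) / (2 * π * (σ + 1)) - 1 / (4 * π)) *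
    (-(Real.log (Real.sqrt ω / 2) + euγ) / (2 * π * β)) ^ (1 / σ)

/-- Energy of the standing wave as a function of the charge. -/
def Echarge (σ β q : ℝ) : ℝ := -q ^ 2 / (4 * π) - σ * β * q ^ (2 * σ + 2) / (σ + 1)

/-- Mass of the standing wave as a function of the frequency. -/
def Mω (σ β ω : ℝ) : ℝ :=
  (1 / (4 * π * ω)) * (-(Real.log (Real.sqrt ω / 2) + euγ) / (2 * π * β)) ^ (1 / σ)

/-- Mass of the standing wave as a function of the charge. -/
def Mq (σ β q : ℝ) : ℝ := q ^ 2 * Real.exp (2 * euγ + 4 * π * β * q ^ (2 * σ)) / (16 * π)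

/-- The minimizing charge. -/
def qbar (σ β : ℝ) : ℝ := (-(4 * π * σ * β)) ^ (-(1 / (2 * σ)) : ℝ)

/-- The blow-up energy threshold. -/
def Λ (σ β : ℝ) : ℝ := -σ / (4 * π * (σ + 1) * (-(4 * π * σ * β)) ^ (1 / σ))

/-- The frequency of minimal energy / maximal mass. -/
def ωbar (σ : ℝ) : ℝ := 4 * Real.exp (-2 * euγ + 1 / σ)

/-- The maximal mass. -/
def μbar (σ β : ℝ) : ℝ :=
  Real.exp (2 * euγ - 1 / σ) / (16 * π * (-(4 * π * σ * β)) ^ (1 / σ))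

lemma sqrt_4exp (x : ℝ) : Real.sqrt (4 * Real.exp x) = 2 * Real.exp (x / 2) := by
  rw [show (4 : ℝ) * Real.exp x = (2 * Real.exp (x / 2)) ^ 2 by
    rw [mul_pow, sq (Real.exp (x/2)), ← Real.exp_add, add_halves]; norm_num]
  exact Real.sqrt_sq (by positivity)

lemma log_sqrt_4exp (x : ℝ) : Real.log (Real.sqrt (4 * Real.exp x) / 2) = x / 2 := by
  rw [sqrt_4exp, mul_div_cancel_left₀ _ (two_ne_zero), Real.log_exp]

lemma key (σ : ℝ) (hσ : 0 < σ) (β : ℝ) (hβ : β < 0) (t : ℝ) (ht : 0 < t) :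
    -σ / (4 * π * (σ + 1) * (-(4 * π * σ * β)) ^ (1 / σ)) ≤
      (σ * t / (2 * π * (σ + 1)) - 1 / (4 * π)) * (-t / (2 * π * β)) ^ (1 / σ) := by
  have hπ := Real.pi_pos
  have hd : (0:ℝ) < -(4 * π * σ * β) := by
    have h0 : (0:ℝ) < 4 * π * σ * (-β) :=
      mul_pos (mul_pos (mul_pos (by norm_num) hπ) hσ) (neg_pos.2 hβ)
    linarith
  set c : ℝ := (-(4 * π * σ * β)) ^ (1 / σ) with hc_def
  have hc : 0 < c := Real.rpow_pos_of_pos hd _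
  set y : ℝ := (2 * σ * t) ^ (1 / σ) with hy_def
  have hst : (0:ℝ) < 2 * σ * t := by positivity
  have hy : 0 < y := Real.rpow_pos_of_pos hst _
  have hyσ : y ^ σ = 2 * σ * t := by
    rw [hy_def, ← Real.rpow_mul hst.le, one_div, inv_mul_cancel₀ hσ.ne', Real.rpow_one]
  have hbern : 1 + (σ + 1) * (y - 1) ≤ y ^ (σ + 1) := by
    have := one_add_mul_self_le_rpow_one_add (s := y - 1) (by linarith) (p := σ + 1) (by linarith)
    simpa using this
  have hysplit : y ^ (σ + 1) = y ^ σ * y := by rw [Real.rpow_add hy, Real.rpow_one]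
  have hkey : -σ ≤ y ^ σ * y - (σ + 1) * y := by nlinarith [hbern, hysplit]
  have hrw : (-t / (2 * π * β)) ^ (1 / σ) = y / c := by
    have h1 : -t / (2 * π * β) = (2 * σ * t) / (-(4 * π * σ * β)) := by
      field_simp [hπ.ne', hβ.ne, hσ.ne']; ring
    rw [h1, Real.div_rpow hst.le hd.le]
  rw [hrw, ← sub_nonneg]
  have ht' : σ * t = y ^ σ / 2 := by rw [hyσ]; ring
  have hexpr : (σ * t / (2 * π * (σ + 1)) - 1 / (4 * π)) * (y / c) -
      -σ / (4 * π * (σ + 1) * c) = (y ^ σ * y - (σ + 1) * y + σ) / (4 * π * (σ + 1) * c) := by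
    rw [ht']; field_simp; ring
  rw [hexpr]
  apply div_nonneg (by linarith) (by positivity)

theorem stmt5 (σ β : ℝ) (hσ : 0 < σ) (hβ : β < 0) :
    ωbar σ ∈ Set.Ioi ωtilde ∧
    (∀ ω > ωtilde, Eω σ β (ωbar σ) ≤ Eω σ β ω) ∧
    Eω σ β (ωbar σ) = Λ σ β := by
  have hπ := Real.pi_pos
  have hd : (0:ℝ) < -(4 * π * σ * β) := by
    have h0 : (0:ℝ) < 4 * π * σ * (-β) :=
      mul_pos (mul_pos (mul_pos (by norm_num) hπ) hσ) (neg_pos.2 hβ)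
    linarith
  have hLbar : Real.log (Real.sqrt (ωbar σ) / 2) + euγ = 1 / (2 * σ) := by
    rw [ωbar, log_sqrt_4exp]; field_simp; ring
  have h3 : Eω σ β (ωbar σ) = Λ σ β := by
    rw [Eω, hLbar, Λ]
    have h1 : -(1 / (2 * σ)) / (2 * π * β) = (-(4 * π * σ * β))⁻¹ := by
      field_simp [hπ.ne', hβ.ne, hσ.ne']
      ring
    rw [h1, ← Real.rpow_neg_one, ← Real.rpow_mul hd.le]
    rw [show (-1 : ℝ) * (1 / σ) = -(1/σ) by ring, Real.rpow_neg hd.le]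
    have hc : (0:ℝ) < (-(4 * π * σ * β)) ^ (1 / σ) := Real.rpow_pos_of_pos hd _
    field_simp
    ring
  refine ⟨?_, ?_, h3⟩
  · rw [Set.mem_Ioi, ωbar, ωtilde]
    have h1 : -2 * euγ < -2 * euγ + 1 / σ := by
      have : (0:ℝ) < 1 / σ := by positivity
      linarith
    have := Real.exp_lt_exp.2 h1
    linarith
  · intro ω hω
    rw [h3]
    have hωt : (0:ℝ) < ωtilde := by rw [ωtilde]; positivity
    have hsq : Real.sqrt ωtilde / 2 = Real.exp (-euγ) := by
      rw [ωtilde, sqrt_4exp]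
      rw [show (-2 * euγ) / 2 = -euγ by ring]
      ring
    have ht : 0 < Real.log (Real.sqrt ω / 2) + euγ := by
      have h1 : Real.exp (-euγ) < Real.sqrt ω / 2 := by
        rw [← hsq]
        have := Real.sqrt_lt_sqrt hωt.le hω
        linarith
      have := Real.log_lt_log (Real.exp_pos _) h1
      rw [Real.log_exp] at this; linarith
    exact key σ hσ β hβ _ ht
end
end

section
/- For σ > 0 and β < 0, the mass function M(ω) = (1/(4πω)) · (-(log(√ω/2)+γ)/(2πβ))^(1/σ) is strictly increasing on (ω̃, ω̄) and strictly decreasing on (ω̄, +∞), where ω̃ = 4e^(-2γ) and ω̄ = 4e^(-2γ+1/σ). -/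
noncomputable section
open Real Filter Set Topology

/-! Put `L ω = log (√ω / 2) + γ`. It increases from `0` at `ω̃` to `1 / (2σ)` at `ω̄`, and
`e^(-2 L ω) = ω̃ / ω`, so `M ω` is a positive multiple of `g (L ω)` with `g t = e^(-2t) t^(1/σ)`.
Since `g' t = e^(-2t) t^(1/σ - 1) (1/σ - 2t)`, the function `g` increases on `[0, 1/(2σ)]` and
decreases on `[1/(2σ), ∞)`. -/

lemma hasDerivAt_exp_neg_mul_mul_rpow (a p : ℝ) {t : ℝ} (ht : 0 < t) :
    HasDerivAt (fun t => exp (-(a * t)) * t ^ p) (exp (-(a * t)) * t ^ (p - 1) * (p - a * t)) t := by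
  have hexp : HasDerivAt (fun t => exp (-(a * t))) (exp (-(a * t)) * -a) t := by
    simpa using ((hasDerivAt_id t).const_mul a).neg.exp
  refine (hexp.mul (hasDerivAt_rpow_const (p := p) (Or.inl ht.ne'))).congr_deriv ?_
  rw [rpow_sub_one ht.ne']
  field_simp
  ring

lemma continuous_exp_neg_mul_mul_rpow (a : ℝ) {p : ℝ} (hp : 0 < p) :
    Continuous fun t => exp (-(a * t)) * t ^ p :=
  (by fun_prop : Continuous fun t => exp (-(a * t))) |>.mul (continuous_rpow_const hp.le)

lemma strictMonoOn_exp_neg_mul_mul_rpow {a p : ℝ} (ha : 0 < a) (hp : 0 < p) :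
    StrictMonoOn (fun t => exp (-(a * t)) * t ^ p) (Icc 0 (p / a)) := by
  refine strictMonoOn_of_deriv_pos (convex_Icc _ _)
    (continuous_exp_neg_mul_mul_rpow a hp).continuousOn fun t ht => ?_
  rw [interior_Icc] at ht
  rw [(hasDerivAt_exp_neg_mul_mul_rpow a p ht.1).deriv]
  have : a * t < p := (lt_div_iff₀' ha).mp ht.2
  have := rpow_pos_of_pos ht.1 (p - 1)
  have : 0 < p - a * t := by linarith
  positivity

lemma strictAntiOn_exp_neg_mul_mul_rpow {a p : ℝ} (ha : 0 < a) (hp : 0 < p) :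
    StrictAntiOn (fun t => exp (-(a * t)) * t ^ p) (Ici (p / a)) := by
  refine strictAntiOn_of_deriv_neg (convex_Ici _)
    (continuous_exp_neg_mul_mul_rpow a hp).continuousOn fun t ht => ?_
  rw [interior_Ici] at ht
  have ht0 : 0 < t := (div_pos hp ha).trans ht
  rw [(hasDerivAt_exp_neg_mul_mul_rpow a p ht0).deriv]
  have : p < a * t := (div_lt_iff₀' ha).mp ht
  have := rpow_pos_of_pos ht0 (p - 1)
  exact mul_neg_of_pos_of_neg (by positivity) (by linarith)

lemma ωtilde_pos : 0 < ωtilde := by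
  unfold ωtilde; positivity

lemma ωbar_pos (σ : ℝ) : 0 < ωbar σ := by
  unfold ωbar; positivity

def logFreq (ω : ℝ) : ℝ := log (sqrt ω / 2) + euγ

lemma logFreq_eq {ω : ℝ} (hω : 0 < ω) : logFreq ω = log ω / 2 - log 2 + euγ := by
  rw [logFreq, log_div (by positivity) two_ne_zero, log_sqrt hω.le]

lemma strictMonoOn_logFreq : StrictMonoOn logFreq (Ioi 0) := fun x hx y _ hxy => by
  have := log_lt_log hx hxy
  rw [logFreq_eq hx, logFreq_eq (lt_trans hx hxy)]
  linarith

lemma logFreq_four_mul_exp (s : ℝ) : logFreq (4 * exp (-2 * euγ + s)) = s / 2 := by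
  rw [logFreq_eq (by positivity), log_mul (by norm_num) (exp_ne_zero _), log_exp,
    show (4 : ℝ) = 2 ^ 2 by norm_num, log_pow]
  push_cast
  ring

lemma logFreq_ωtilde : logFreq ωtilde = 0 := by
  simpa [ωtilde] using logFreq_four_mul_exp 0

lemma logFreq_ωbar (σ : ℝ) : logFreq (ωbar σ) = 1 / σ / 2 :=
  logFreq_four_mul_exp _

lemma exp_neg_two_mul_logFreq {ω : ℝ} (hω : 0 < ω) : exp (-(2 * logFreq ω)) = ωtilde / ω := by
  have hlog4 : log 4 = 2 * log 2 := by
    rw [show (4 : ℝ) = 2 ^ 2 by norm_num, log_pow, Nat.cast_ofNat]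
  have : -(2 * logFreq ω) = -2 * euγ + log 4 - log ω := by
    rw [logFreq_eq hω, hlog4]; ring
  rw [this, exp_sub, exp_add, exp_log hω, exp_log (by norm_num), ωtilde]
  ring

lemma Mω_eq_mul {σ β ω : ℝ} (hβ : β < 0) (hω : 0 < ω) (hL : 0 ≤ logFreq ω) :
    Mω σ β ω = (4 * π * ωtilde)⁻¹ * (-(2 * π * β))⁻¹ ^ (1 / σ) *
      (exp (-(2 * logFreq ω)) * logFreq ω ^ (1 / σ)) := by
  have hβ' : 0 < (-(2 * π * β))⁻¹ := inv_pos.2 (by nlinarith [pi_pos])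
  have : -logFreq ω / (2 * π * β) = (-(2 * π * β))⁻¹ * logFreq ω := by
    field_simp
  rw [Mω, ← logFreq, this, mul_rpow hβ'.le hL, exp_neg_two_mul_logFreq hω]
  field_simp [ωtilde_pos.ne']

theorem stmt7 (σ β : ℝ) (hσ : 0 < σ) (hβ : β < 0) :
    StrictMonoOn (Mω σ β) (Set.Ioo ωtilde (ωbar σ)) ∧
    StrictAntiOn (Mω σ β) (Set.Ioi (ωbar σ)) := by
  have hp : 0 < 1 / σ := by positivity
  have hc : 0 < (4 * π * ωtilde)⁻¹ * (-(2 * π * β))⁻¹ ^ (1 / σ) := by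
    have : 0 < -(2 * π * β) := by nlinarith [pi_pos]
    have := ωtilde_pos
    positivity
  have hscale := strictMono_mul_left_of_pos hc
  have hL := strictMonoOn_logFreq
  have hbar := ωbar_pos σ
  constructor
  · have hpos : ∀ ω ∈ Ioo ωtilde (ωbar σ), 0 < ω := fun ω hω => ωtilde_pos.trans hω.1
    have hmaps : MapsTo logFreq (Ioo ωtilde (ωbar σ)) (Icc 0 (1 / σ / 2)) := fun ω hω =>
      ⟨logFreq_ωtilde ▸ (hL ωtilde_pos (hpos ω hω) hω.1).le,
        logFreq_ωbar σ ▸ (hL (hpos ω hω) hbar hω.2).le⟩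
    refine (hscale.comp_strictMonoOn
      ((strictMonoOn_exp_neg_mul_mul_rpow two_pos hp).comp (hL.mono hpos) hmaps)).congr
      fun ω hω => (Mω_eq_mul hβ (hpos ω hω) (hmaps hω).1).symm
  · have hpos : ∀ ω ∈ Ioi (ωbar σ), 0 < ω := fun ω hω => hbar.trans hω
    have hmaps : MapsTo logFreq (Ioi (ωbar σ)) (Ici (1 / σ / 2)) := fun ω hω =>
      logFreq_ωbar σ ▸ (hL hbar (hpos ω hω) hω).le
    refine (hscale.comp_strictAntiOn
      ((strictAntiOn_exp_neg_mul_mul_rpow two_pos hp).comp_strictMonoOn (hL.mono hpos) hmaps)).congr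
      fun ω hω => (Mω_eq_mul hβ (hpos ω hω) ((half_pos hp).le.trans (hmaps hω))).symm
end
end

section
/- For σ > 0 and β < 0, the mass M(ω) = (1/(4πω)) · (-(log(√ω/2)+γ)/(2πβ))^(1/σ) satisfies lim_{ω→ω̃⁺} M(ω) = 0 and lim_{ω→+∞} M(ω) = 0, where ω̃ = 4e^(-2γ). -/
noncomputable section
open Real Filter Set Topology

theorem stmt8 (σ β : ℝ) (hσ : 0 < σ) (hβ : β < 0) :
    Filter.Tendsto (Mω σ β) (nhdsWithin ωtilde (Set.Ioi ωtilde)) (nhds 0) ∧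
    Filter.Tendsto (Mω σ β) Filter.atTop (nhds 0) := by
  have hπ : (0:ℝ) < π := Real.pi_pos
  have hβ' : β ≠ 0 := ne_of_lt hβ
  constructor
  · -- limit at ωtilde from the right
    have hω0 : (0:ℝ) < ωtilde := by unfold ωtilde; positivity
    have hsqrt : Real.sqrt ωtilde = 2 * Real.exp (-euγ) := by
      rw [show ωtilde = (2 * Real.exp (-euγ))^2 by
        unfold ωtilde
        rw [mul_pow, ← Real.exp_nat_mul]
        norm_num]
      exact Real.sqrt_sq (by positivity)
    have hval : Mω σ β ωtilde = 0 := by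
      unfold Mω
      rw [hsqrt, show (2:ℝ) * Real.exp (-euγ) / 2 = Real.exp (-euγ) by ring, Real.log_exp]
      simp [Real.zero_rpow (by positivity : (1:ℝ)/σ ≠ 0)]
      exact Or.inr (Real.zero_rpow (by positivity))
    have hcont : ContinuousAt (Mω σ β) ωtilde := by
      have h1 : ContinuousAt
          (fun ω : ℝ => -(Real.log (Real.sqrt ω / 2) + euγ) / (2 * π * β)) ωtilde := by
        apply ContinuousAt.div_const
        apply ContinuousAt.neg
        apply ContinuousAt.add _ continuousAt_const
        apply ContinuousAt.comp (Real.continuousAt_log ?_)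
          ((Real.continuous_sqrt.continuousAt).div_const 2)
        rw [hsqrt]
        positivity
      have h2 : ContinuousAt
          (fun ω : ℝ => (-(Real.log (Real.sqrt ω / 2) + euγ) / (2 * π * β)) ^ (1/σ : ℝ))
          ωtilde := h1.rpow_const (Or.inr (by positivity))
      have h3 : ContinuousAt (fun ω : ℝ => 1 / (4 * π * ω)) ωtilde := by
        apply ContinuousAt.div continuousAt_const (by fun_prop)
        positivity
      exact h3.mul h2
    have := hcont.tendsto
    rw [hval] at this
    exact this.mono_left nhdsWithin_le_nhds
  · -- limit at +∞
    have hβpos : (0:ℝ) < -(4 * π * β) := by nlinarith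
    set A : ℝ := (-(4 * π * β))⁻¹ with hA
    have hApos : 0 < A := inv_pos.mpr hβpos
    set C : ℝ := (euγ - Real.log 2) / (-(2 * π * β)) with hC
    have hh := tendsto_rpow_mul_exp_neg_mul_atTop_nhds_zero (1/σ) (1/A) (by positivity)
    have hφ : Tendsto (fun ω : ℝ => A * Real.log ω + C) atTop atTop := by
      apply Filter.tendsto_atTop_add_const_right
      exact Real.tendsto_log_atTop.const_mul_atTop hApos
    have htot := (hh.comp hφ).const_mul ((1 / (4 * π)) * Real.exp (C / A))
    rw [mul_zero] at htot
    apply htot.congr'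
    filter_upwards [eventually_ge_atTop (1:ℝ)] with ω hω
    have hωpos : (0:ℝ) < ω := lt_of_lt_of_le one_pos hω
    have hbase : -(Real.log (Real.sqrt ω / 2) + euγ) / (2 * π * β)
        = A * Real.log ω + C := by
      rw [Real.log_div (by positivity) two_ne_zero, Real.log_sqrt hωpos.le, hA, hC]
      field_simp
      ring
    have hexp : Real.exp (-(1/A) * (A * Real.log ω + C))
        = Real.exp (-Real.log ω - C / A) := by
      congr 1
      field_simp
      ring
    show (1 / (4 * π)) * Real.exp (C / A) *
        ((A * Real.log ω + C) ^ (1/σ : ℝ) * Real.exp (-(1/A) * (A * Real.log ω + C)))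
        = Mω σ β ω
    rw [hexp]
    unfold Mω
    rw [hbase]
    have : Real.exp (C / A) * Real.exp (-Real.log ω - C / A) = ω⁻¹ := by
      rw [← Real.exp_add, show C / A + (-Real.log ω - C / A) = -Real.log ω by ring,
        Real.exp_neg, Real.exp_log hωpos]
    have key : (1 / (4 * π)) * Real.exp (C / A) *
        ((A * Real.log ω + C) ^ (1/σ : ℝ) * Real.exp (-Real.log ω - C / A))
        = (1 / (4 * π)) * (Real.exp (C / A) * Real.exp (-Real.log ω - C / A)) *
          (A * Real.log ω + C) ^ (1/σ : ℝ) := by ring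
    rw [key, this]
    field_simp
end
end

section
/- For σ > 0 and β < 0, for every μ ∈ (0, μ̄), where μ̄ = e^(2γ-1/σ)/(16π(-4πσβ)^(1/σ)), there exist exactly two frequencies ω₁ ∈ (ω̃, ω̄) and ω₂ ∈ (ω̄, +∞) such that M(ω₁) = M(ω₂) = μ, where M(ω) = (1/(4πω))·(-(log(√ω/2)+γ)/(2πβ))^(1/σ), ω̃ = 4e^(-2γ), ω̄ = 4e^(-2γ+1/σ). -/
/-!
In the variable `t = log (√ω / 2) + γ`, an increasing bijection from `(0, ∞)` onto `ℝ` that maps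
`ω̃` to `0` and `ω̄` to `1 / (2σ)`, the mass becomes `M = K t ^ (1/σ) e^(-2t)` with `K > 0`.
This profile vanishes at `t = 0`, increases up to its maximum `μ̄` at `t = 1 / (2σ)` and then
decreases to `0`, so every level in `(0, μ̄)` is attained exactly once on each side of the peak.
-/

noncomputable section
open Real Filter Set Topology

lemma Function.Injective.existsUnique_iff_comp {α β : Type*} {f : α → β}
    (hf : Function.Injective f) {p : β → Prop} (hp : ∀ y, p y → y ∈ range f) :
    (∃! y, p y) ↔ ∃! x, p (f x) := by
  constructor
  · rintro ⟨y, hy, huniq⟩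
    obtain ⟨x, rfl⟩ := hp y hy
    exact ⟨x, hy, fun x' hx' => hf (huniq _ hx')⟩
  · rintro ⟨x, hx, huniq⟩
    refine ⟨f x, hx, fun y hy => ?_⟩
    obtain ⟨x', rfl⟩ := hp y hy
    rw [huniq x' hy]

lemma existsUnique_mem_Ioo_of_strictMonoOn {f : ℝ → ℝ} {a b μ : ℝ} (hab : a ≤ b)
    (hf : ContinuousOn f (Icc a b)) (hmono : StrictMonoOn f (Icc a b))
    (hμ : μ ∈ Ioo (f a) (f b)) : ∃! t, t ∈ Ioo a b ∧ f t = μ := by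
  obtain ⟨t, ht, rfl⟩ := intermediate_value_Ioo hab hf hμ
  exact ⟨t, ⟨ht, rfl⟩, fun s ⟨hs, hst⟩ =>
    hmono.injOn (Ioo_subset_Icc_self hs) (Ioo_subset_Icc_self ht) hst⟩

lemma existsUnique_mem_Ioi_of_strictAntiOn {f : ℝ → ℝ} {b l μ : ℝ}
    (hf : ContinuousOn f (Ici b)) (hanti : StrictAntiOn f (Ici b))
    (hlim : Tendsto f atTop (𝓝 l)) (hμ : μ ∈ Ioo l (f b)) :
    ∃! t, t ∈ Ioi b ∧ f t = μ := by
  obtain ⟨c, hcμ, hbc⟩ :=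
    ((hlim.eventually (gt_mem_nhds hμ.1)).and (eventually_gt_atTop b)).exists
  obtain ⟨t, ht, rfl⟩ := intermediate_value_Ioo' hbc.le (hf.mono Icc_subset_Ici_self) ⟨hcμ, hμ.2⟩
  exact ⟨t, ⟨ht.1, rfl⟩, fun s ⟨hs, hst⟩ =>
    hanti.injOn (mem_Ici.2 hs.le) (mem_Ici.2 ht.1.le) hst⟩

section RpowMulExpNeg

variable {p c : ℝ}

lemma continuous_rpow_mul_exp_neg_mul (hp : 0 ≤ p) :
    Continuous fun x : ℝ => x ^ p * exp (-c * x) :=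
  (continuous_id.rpow_const fun _ => Or.inr hp).mul (by fun_prop)

lemma hasDerivAt_rpow_mul_exp_neg_mul {t : ℝ} (ht : 0 < t) :
    HasDerivAt (fun x : ℝ => x ^ p * exp (-c * x))
      (t ^ (p - 1) * exp (-c * t) * (p - c * t)) t := by
  have hpow := Real.hasDerivAt_rpow_const (p := p) (Or.inl ht.ne')
  have hexp : HasDerivAt (fun x => exp (-c * x)) (exp (-c * t) * -c) t := by
    simpa using ((hasDerivAt_id t).const_mul (-c)).exp
  refine (hpow.mul hexp).congr_deriv ?_
  rw [show t ^ p = t ^ (p - 1) * t by rw [← Real.rpow_add_one ht.ne']; ring_nf]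
  ring

lemma strictMonoOn_rpow_mul_exp_neg_mul (hp : 0 ≤ p) (hc : 0 < c) :
    StrictMonoOn (fun x : ℝ => x ^ p * exp (-c * x)) (Icc 0 (p / c)) := by
  refine strictMonoOn_of_deriv_pos (convex_Icc _ _)
    (continuous_rpow_mul_exp_neg_mul hp).continuousOn fun t ht => ?_
  rw [interior_Icc] at ht
  have hct : c * t < p := (lt_div_iff₀' hc).1 ht.2
  rw [(hasDerivAt_rpow_mul_exp_neg_mul ht.1).deriv]
  exact mul_pos (mul_pos (Real.rpow_pos_of_pos ht.1 _) (exp_pos _)) (by linarith)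

lemma strictAntiOn_rpow_mul_exp_neg_mul (hp : 0 ≤ p) (hc : 0 < c) :
    StrictAntiOn (fun x : ℝ => x ^ p * exp (-c * x)) (Ici (p / c)) := by
  refine strictAntiOn_of_deriv_neg (convex_Ici _)
    (continuous_rpow_mul_exp_neg_mul hp).continuousOn fun t ht => ?_
  rw [interior_Ici] at ht
  have hpt : p < c * t := (div_lt_iff₀' hc).1 ht
  have ht0 : 0 < t := (div_nonneg hp hc.le).trans_lt ht
  rw [(hasDerivAt_rpow_mul_exp_neg_mul ht0).deriv]
  exact mul_neg_of_pos_of_neg (mul_pos (Real.rpow_pos_of_pos ht0 _) (exp_pos _)) (by linarith)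

end RpowMulExpNeg

/-- The change of variables `t = log (√ω / 2) + γ`, solved for `ω`. -/
def freq (t : ℝ) : ℝ := 4 * exp (2 * t - 2 * euγ)

lemma freq_pos (t : ℝ) : 0 < freq t := by
  unfold freq; positivity

lemma freq_strictMono : StrictMono freq := fun _ _ h => by
  unfold freq; gcongr

lemma freq_zero : freq 0 = ωtilde := by
  rw [freq, ωtilde]; ring_nf

lemma freq_one_div_div_two (σ : ℝ) : freq (1 / σ / 2) = ωbar σ := by
  rw [freq, ωbar]; ring_nf

lemma mem_range_freq {ω : ℝ} (hω : 0 < ω) : ω ∈ range freq :=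
  ⟨(log (ω / 4) + 2 * euγ) / 2, by
    rw [freq, show 2 * ((log (ω / 4) + 2 * euγ) / 2) - 2 * euγ = log (ω / 4) by ring,
      exp_log (by positivity)]
    ring⟩

lemma log_sqrt_freq_div_two_add (t : ℝ) : log (√(freq t) / 2) + euγ = t := by
  have hsqrt : √(freq t) = 2 * exp (t - euγ) := by
    rw [Real.sqrt_eq_iff_eq_sq (freq_pos t).le (by positivity), mul_pow,
      ← exp_nat_mul, freq]
    ring_nf
  rw [hsqrt, mul_div_cancel_left₀ _ two_ne_zero, log_exp]
  ring

def massConst (σ β : ℝ) : ℝ := exp (2 * euγ) / (16 * π * (-(2 * π * β)) ^ (1 / σ))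

lemma massConst_pos {σ β : ℝ} (hβ : β < 0) : 0 < massConst σ β := by
  have : 0 < -(2 * π * β) := by nlinarith [pi_pos]
  unfold massConst; positivity

lemma Mω_freq {σ β t : ℝ} (hβ : β ≤ 0) (ht : 0 ≤ t) :
    Mω σ β (freq t) = massConst σ β * (t ^ (1 / σ) * exp (-2 * t)) := by
  have hβ' : 0 ≤ -(2 * π * β) := by nlinarith [pi_pos]
  rw [Mω, log_sqrt_freq_div_two_add, neg_div, ← div_neg, div_rpow ht hβ', massConst, freq,
    show -2 * t = -(2 * t) by ring, exp_neg, exp_sub]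
  field_simp
  ring

lemma μbar_eq_massConst_mul {σ β : ℝ} (hσ : 0 < σ) (hβ : β < 0) :
    μbar σ β = massConst σ β * ((1 / σ / 2) ^ (1 / σ) * exp (-2 * (1 / σ / 2))) := by
  have hβ' : 0 < -(2 * π * β) := by nlinarith [pi_pos]
  have hbase : -(4 * π * σ * β) = (1 / σ / 2)⁻¹ * -(2 * π * β) := by field_simp; ring
  rw [μbar, massConst, hbase, mul_rpow (by positivity) hβ'.le, inv_rpow (by positivity),
    show 2 * euγ - 1 / σ = 2 * euγ + -2 * (1 / σ / 2) by ring, exp_add]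
  field_simp

lemma Mω_freq_eq_iff {σ β μ t : ℝ} (hβ : β < 0) (ht : 0 ≤ t) :
    Mω σ β (freq t) = μ ↔ t ^ (1 / σ) * exp (-2 * t) = μ / massConst σ β := by
  rw [Mω_freq hβ.le ht, eq_div_iff (massConst_pos hβ).ne', mul_comm]

theorem stmt10 (σ β μ : ℝ) (hσ : 0 < σ) (hβ : β < 0)
    (hμ : μ ∈ Set.Ioo 0 (μbar σ β)) :
    (∃! ω, ω ∈ Set.Ioo ωtilde (ωbar σ) ∧ Mω σ β ω = μ) ∧
    (∃! ω, ω ∈ Set.Ioi (ωbar σ) ∧ Mω σ β ω = μ) := by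
  obtain ⟨hμ0, hμbar⟩ := hμ
  have hp : 0 < 1 / σ := by positivity
  have hK := massConst_pos (σ := σ) hβ
  have hlevel : μ / massConst σ β ∈ Ioo 0 ((1 / σ / 2) ^ (1 / σ) * exp (-2 * (1 / σ / 2))) :=
    ⟨div_pos hμ0 hK, by rwa [div_lt_iff₀' hK, ← μbar_eq_massConst_mul hσ hβ]⟩
  rw [← freq_zero, ← freq_one_div_div_two]
  constructor
  · rw [freq_strictMono.injective.existsUnique_iff_comp fun ω hω =>
      mem_range_freq ((freq_pos 0).trans hω.1.1)]
    refine (existsUnique_congr fun t => ?_).2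
      (existsUnique_mem_Ioo_of_strictMonoOn (μ := μ / massConst σ β) (by positivity)
        (continuous_rpow_mul_exp_neg_mul hp.le).continuousOn
        (strictMonoOn_rpow_mul_exp_neg_mul hp.le two_pos) ?_)
    · simp only [mem_Ioo, freq_strictMono.lt_iff_lt]
      exact and_congr_right fun ht => Mω_freq_eq_iff hβ ht.1.le
    · rwa [zero_rpow hp.ne', zero_mul]
  · rw [freq_strictMono.injective.existsUnique_iff_comp fun ω hω =>
      mem_range_freq ((freq_pos _).trans hω.1)]
    refine (existsUnique_congr fun t => ?_).2 (existsUnique_mem_Ioi_of_strictAntiOn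
      (continuous_rpow_mul_exp_neg_mul hp.le).continuousOn
      (strictAntiOn_rpow_mul_exp_neg_mul hp.le two_pos)
      (tendsto_rpow_mul_exp_neg_mul_atTop_nhds_zero _ _ two_pos) hlevel)
    simp only [mem_Ioi, freq_strictMono.lt_iff_lt]
    exact and_congr_right fun ht => Mω_freq_eq_iff hβ ((div_pos hp two_pos).le.trans ht.le)
end
end

section
/- For σ > 0 and β < 0, the mass expressed in terms of the charge q is M(q) = q² e^(2γ + 4πβ q^(2σ)) / (16π) for q > 0, i.e., substituting ω = ω(q) = 4e^(-2γ - 4πβ q^(2σ)) into M = q²/(4πω) yields this formula; moreover sup_{q>0} M(q) = M(q̄) = μ̄ with q̄ = (-4πσβ)^(-1/(2σ)) and μ̄ = e^(2γ-1/σ)/(16π(-4πσβ)^(1/σ)). -/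
noncomputable section
open Real Filter Set Topology

/- Writing `t = q ^ (2σ)`, the mass is `t ^ (1/σ) e^{-c t}` up to the constant `e^{2γ} / (16π)`,
with `c = -4πβ > 0`. By `log y ≤ y - 1`, `x ^ p e^{-c x}` is maximal at `x = p / c`, and `qbar` is
exactly the charge with `qbar ^ (2σ) = (1/σ) / c`. -/

theorem Mq_eq_div_ωof (σ β q : ℝ) : Mq σ β q = q ^ 2 / (4 * π * ωof σ β q) := by
  rw [Mq, ωof, show -2 * euγ - 4 * π * β * q ^ (2 * σ) = -(2 * euγ + 4 * π * β * q ^ (2 * σ)) by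
    ring, exp_neg]
  field_simp
  ring

theorem rpow_mul_exp_neg_mul_le {p c x : ℝ} (hp : 0 < p) (hc : 0 < c) (hx : 0 < x) :
    x ^ p * exp (-(c * x)) ≤ (p / c) ^ p * exp (-p) := by
  have hpc : 0 < p / c := div_pos hp hc
  rw [rpow_def_of_pos hx, rpow_def_of_pos hpc, ← exp_add, ← exp_add, exp_le_exp]
  have hlog : log (x / (p / c)) ≤ x / (p / c) - 1 := log_le_sub_one_of_pos (div_pos hx hpc)
  rw [log_div hx.ne' hpc.ne'] at hlog
  have hscale : p * (x / (p / c)) = c * x := by field_simp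
  nlinarith [mul_le_mul_of_nonneg_left hlog hp.le]

theorem Mq_eq_rpow_mul_exp {σ β q : ℝ} (hσ : σ ≠ 0) (hq : 0 ≤ q) :
    Mq σ β q = (q ^ (2 * σ)) ^ (1 / σ) * exp (-(-(4 * π * β) * q ^ (2 * σ))) *
      (exp (2 * euγ) / (16 * π)) := by
  have hq2 : (q ^ (2 * σ)) ^ (1 / σ) = q ^ 2 := by
    rw [← rpow_mul hq, show 2 * σ * (1 / σ) = (2 : ℕ) by field_simp; norm_num, rpow_natCast]
  rw [Mq, hq2, add_comm, exp_add]
  ring_nf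

theorem qbar_rpow {σ β : ℝ} (hσ : 0 < σ) (hβ : β < 0) :
    qbar σ β ^ (2 * σ) = 1 / σ / -(4 * π * β) := by
  have hA : 0 < -(4 * π * σ * β) := by nlinarith [mul_pos pi_pos hσ]
  rw [qbar, ← rpow_mul hA.le, show -(1 / (2 * σ)) * (2 * σ) = -1 by field_simp, rpow_neg_one]
  field_simp

theorem qbar_pos {σ β : ℝ} (hσ : 0 < σ) (hβ : β < 0) : 0 < qbar σ β :=
  rpow_pos_of_pos (by nlinarith [mul_pos pi_pos hσ]) _

theorem Mq_le_Mq_qbar {σ β q : ℝ} (hσ : 0 < σ) (hβ : β < 0) (hq : 0 < q) :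
    Mq σ β q ≤ Mq σ β (qbar σ β) := by
  have hc : 0 < -(4 * π * β) := by nlinarith [pi_pos]
  rw [Mq_eq_rpow_mul_exp hσ.ne' hq.le, Mq_eq_rpow_mul_exp hσ.ne' (qbar_pos hσ hβ).le,
    qbar_rpow hσ hβ, mul_div_cancel₀ _ hc.ne']
  exact mul_le_mul_of_nonneg_right
    (rpow_mul_exp_neg_mul_le (by positivity) hc (rpow_pos_of_pos hq _)) (by positivity)

theorem Mq_qbar {σ β : ℝ} (hσ : 0 < σ) (hβ : β < 0) : Mq σ β (qbar σ β) = μbar σ β := by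
  have hc : 0 < -(4 * π * β) := by nlinarith [pi_pos]
  have hA : 1 / σ / -(4 * π * β) = (-(4 * π * σ * β))⁻¹ := by field_simp
  rw [Mq_eq_rpow_mul_exp hσ.ne' (qbar_pos hσ hβ).le, qbar_rpow hσ hβ, mul_div_cancel₀ _ hc.ne',
    hA, inv_rpow (by nlinarith [mul_pos pi_pos hσ]), μbar, sub_eq_add_neg, exp_add]
  field_simp

theorem stmt11 (σ β : ℝ) (hσ : 0 < σ) (hβ : β < 0) :
    (∀ q > 0, Mq σ β q = q ^ 2 / (4 * π * ωof σ β q)) ∧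
    IsGreatest (Mq σ β '' Set.Ioi 0) (Mq σ β (qbar σ β)) ∧
    Mq σ β (qbar σ β) = μbar σ β := by
  refine ⟨fun q _ => Mq_eq_div_ωof σ β q, ⟨⟨qbar σ β, qbar_pos hσ hβ, rfl⟩, ?_⟩, Mq_qbar hσ hβ⟩
  rintro _ ⟨q, hq, rfl⟩
  exact Mq_le_Mq_qbar hσ hβ hq
end
end

section
/- For σ > 0 and β > 0 (defocusing case), the charge q(ω) = (-(log(√ω/2)+γ)/(2πβ))^(1/(2σ)) is well-defined and positive for ω ∈ (0, ω̃) with ω̃ = 4e^(-2γ), and the mass M(ω) = q²(ω)/(4πω) is strictly decreasing on (0, ω̃) with range all of (0, +∞); hence for every μ > 0 there is a unique ω_μ ∈ (0, ω̃) with M(ω_μ) = μ. -/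
noncomputable section
open Real Filter Set Topology

/-! Since `log (√ω / 2) + γ = (log ω - log ω̃) / 2`, the base `-(log (√ω / 2) + γ) / (2πβ)` of the
charge equals `(log ω̃ - log ω) / (4πβ)`: it is positive and strictly decreasing on `(0, ω̃)`,
vanishes at `ω̃` and tends to `+∞` as `ω → 0⁺`. The mass is its `1/σ`-th power times the
decreasing factor `1 / (4πω)`, so it decreases strictly and continuously from `+∞` to `0`, and
the intermediate value theorem hits every `μ > 0` exactly once. -/

theorem StrictAntiOn.existsUnique_eq_of_tendsto {α δ : Type*} [ConditionallyCompleteLinearOrder α]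
    [TopologicalSpace α] [OrderTopology α] [DenselyOrdered α] [LinearOrder δ] [TopologicalSpace δ]
    [OrderClosedTopology δ] {f : α → δ} {a b : α} {c μ : δ} (hab : a < b)
    (hf : StrictAntiOn f (Ioo a b)) (hcont : ContinuousOn f (Ioo a b))
    (hleft : Tendsto f (𝓝[>] a) atTop) (hright : Tendsto f (𝓝[<] b) (𝓝 c)) (hμ : c < μ) :
    ∃! x, x ∈ Ioo a b ∧ f x = μ := by
  have : (𝓝[>] a).NeBot := nhdsGT_neBot_of_exists_gt ⟨b, hab⟩
  have : (𝓝[<] b).NeBot := nhdsLT_neBot_of_exists_lt ⟨a, hab⟩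
  obtain ⟨x₁, hx₁μ, hx₁⟩ :=
    ((hleft.eventually (eventually_ge_atTop μ)).and (Ioo_mem_nhdsGT hab)).exists
  obtain ⟨x₂, hx₂μ, hx₂⟩ :=
    ((hright.eventually (eventually_lt_nhds hμ)).and (Ioo_mem_nhdsLT hab)).exists
  have hx₁₂ : x₁ < x₂ := (hf.lt_iff_gt hx₂ hx₁).1 (hx₂μ.trans_le hx₁μ)
  have hsub : Icc x₁ x₂ ⊆ Ioo a b := Icc_subset_Ioo hx₁.1 hx₂.2
  obtain ⟨x, hx, hxμ⟩ := intermediate_value_Icc' hx₁₂.le (hcont.mono hsub) ⟨hx₂μ.le, hx₁μ⟩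
  exact ⟨x, ⟨hsub hx, hxμ⟩, fun y ⟨hy, hyμ⟩ => hf.injOn hy (hsub hx) (hyμ.trans hxμ.symm)⟩

lemma log_ωtilde : log ωtilde = 2 * log 2 - 2 * euγ := by
  rw [ωtilde, log_mul (by norm_num) (exp_pos _).ne', log_exp,
    show (4 : ℝ) = 2 ^ 2 by norm_num, log_pow]
  push_cast
  ring

/-- The paper's `q ^ (2σ)`; `charge` and `Mω` are powers of it. -/
def chargeBase (β ω : ℝ) : ℝ := -(log (√ω / 2) + euγ) / (2 * π * β)

lemma chargeBase_eq (β : ℝ) {ω : ℝ} (hω : 0 < ω) :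
    chargeBase β ω = (log ωtilde - log ω) / (4 * π * β) := by
  rw [chargeBase, log_ωtilde, log_div (sqrt_pos.2 hω).ne' two_ne_zero, log_sqrt hω.le]
  ring

lemma chargeBase_pos {β ω : ℝ} (hβ : 0 < β) (hω : ω ∈ Ioo 0 ωtilde) : 0 < chargeBase β ω := by
  rw [chargeBase_eq β hω.1]
  exact div_pos (sub_pos.2 (log_lt_log hω.1 hω.2)) (by positivity)

lemma chargeBase_ωtilde (β : ℝ) : chargeBase β ωtilde = 0 := by
  simp [chargeBase_eq β ωtilde_pos]

lemma strictAntiOn_chargeBase {β : ℝ} (hβ : 0 < β) : StrictAntiOn (chargeBase β) (Ioi 0) := by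
  intro x hx y hy hxy
  rw [chargeBase_eq β hx, chargeBase_eq β hy]
  gcongr

lemma continuousOn_chargeBase (β : ℝ) : ContinuousOn (chargeBase β) (Ioi 0) :=
  ((continuousOn_const.sub (continuousOn_log.mono fun _ hx => ne_of_gt hx)).div_const _).congr
    fun _ hω => chargeBase_eq β hω

lemma tendsto_chargeBase_nhdsGT_zero {β : ℝ} (hβ : 0 < β) :
    Tendsto (chargeBase β) (𝓝[>] 0) atTop := by
  have hlog : Tendsto (fun ω => log ωtilde - log ω) (𝓝[>] 0) atTop :=
    tendsto_atTop_add_const_left _ _ (tendsto_neg_atBot_atTop.comp tendsto_log_nhdsGT_zero)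
  refine (hlog.atTop_div_const (r := 4 * π * β) (by positivity)).congr' ?_
  filter_upwards [self_mem_nhdsWithin] with ω hω using (chargeBase_eq β hω).symm

lemma Mω_eq (σ β ω : ℝ) : Mω σ β ω = 1 / (4 * π * ω) * chargeBase β ω ^ (1 / σ) := rfl

lemma strictAntiOn_Mω {σ β : ℝ} (hσ : 0 < σ) (hβ : 0 < β) :
    StrictAntiOn (Mω σ β) (Ioo 0 ωtilde) := by
  intro x hx y hy hxy
  have hx₀ : 0 < x := hx.1
  have hy₀ : 0 < y := hy.1
  have hGy := chargeBase_pos hβ hy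
  have hG := strictAntiOn_chargeBase hβ hx₀ hy₀ hxy
  simp only [Mω_eq]
  gcongr

lemma continuousOn_Mω {σ : ℝ} (β : ℝ) (hσ : 0 < σ) : ContinuousOn (Mω σ β) (Ioi 0) := by
  have hinv : ContinuousOn (fun ω : ℝ => 1 / (4 * π * ω)) (Ioi 0) :=
    continuousOn_const.div (by fun_prop) fun ω hω => by have : 0 < ω := hω; positivity
  exact hinv.mul ((continuousOn_chargeBase β).rpow_const fun _ _ => Or.inr (by positivity))

lemma Mω_ωtilde {σ : ℝ} (β : ℝ) (hσ : 0 < σ) : Mω σ β ωtilde = 0 := by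
  rw [Mω_eq, chargeBase_ωtilde, zero_rpow (by positivity), mul_zero]

lemma tendsto_Mω_nhdsGT_zero {σ β : ℝ} (hσ : 0 < σ) (hβ : 0 < β) :
    Tendsto (Mω σ β) (𝓝[>] 0) atTop := by
  have hinv : Tendsto (fun ω : ℝ => 1 / (4 * π * ω)) (𝓝[>] 0) atTop :=
    (tendsto_inv_nhdsGT_zero.const_mul_atTop (by positivity : 0 < (4 * π)⁻¹)).congr
      fun ω => by ring
  exact hinv.atTop_mul_atTop₀
    ((tendsto_rpow_atTop (by positivity)).comp (tendsto_chargeBase_nhdsGT_zero hβ))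

theorem stmt14 (σ β : ℝ) (hσ : 0 < σ) (hβ : 0 < β) :
    (∀ ω ∈ Set.Ioo 0 ωtilde, 0 < charge σ β ω) ∧
    StrictAntiOn (Mω σ β) (Set.Ioo 0 ωtilde) ∧
    (∀ μ > 0, ∃! ω, ω ∈ Set.Ioo 0 ωtilde ∧ Mω σ β ω = μ) := by
  have hcont := continuousOn_Mω β hσ
  have hright : Tendsto (Mω σ β) (𝓝[<] ωtilde) (𝓝 0) := by
    rw [← Mω_ωtilde β hσ]
    exact (hcont.continuousAt (Ioi_mem_nhds ωtilde_pos)).continuousWithinAt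
  exact ⟨fun ω hω => rpow_pos_of_pos (chargeBase_pos hβ hω) _, strictAntiOn_Mω hσ hβ,
    fun μ hμ => (strictAntiOn_Mω hσ hβ).existsUnique_eq_of_tendsto ωtilde_pos
      (hcont.mono Ioo_subset_Ioi_self) (tendsto_Mω_nhdsGT_zero hσ hβ) hright hμ⟩
end
end

section
/- For σ > 0 and β > 0, the function E(ω) = ((σ(log(√ω/2)+γ))/(2π(σ+1)) - 1/(4π)) · (-(log(√ω/2)+γ)/(2πβ))^(1/σ) on (0, ω̃) with ω̃ = 4e^(-2γ) is unbounded from below: lim_{ω→0⁺} E(ω) = -∞. -/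
noncomputable section
open Real Filter Set Topology

/-
The standing-wave energy is a product of an affine function of `L(ω) = log (√ω / 2) + γ`
with positive slope and a positive power of `-L(ω)`. As `ω → 0⁺`, `L(ω) → -∞`, so the
first factor tends to `-∞` and the second to `+∞`.
-/

theorem tendsto_log_sqrt_div_two_nhdsGT_zero :
    Tendsto (fun ω => Real.log (Real.sqrt ω / 2)) (𝓝[>] 0) atBot := by
  refine Real.tendsto_log_nhdsGT_zero.comp (tendsto_nhdsWithin_iff.2 ⟨?_, ?_⟩)
  · simpa using (Real.continuous_sqrt.div_const 2).continuousAt.tendsto.mono_left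
      (nhdsWithin_le_nhds (a := (0 : ℝ)) (s := Ioi 0))
  · filter_upwards [self_mem_nhdsWithin] with ω hω
    exact div_pos (Real.sqrt_pos.2 hω) two_pos

theorem stmt18 (σ β : ℝ) (hσ : 0 < σ) (hβ : 0 < β) :
    Filter.Tendsto (Eω σ β) (nhdsWithin 0 (Set.Ioi 0)) Filter.atBot := by
  have hL : Tendsto (fun ω => Real.log (Real.sqrt ω / 2) + euγ) (𝓝[>] 0) atBot :=
    tendsto_atBot_add_const_right _ _ tendsto_log_sqrt_div_two_nhdsGT_zero
  have affine_factor : Tendsto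
      (fun ω => σ * (Real.log (Real.sqrt ω / 2) + euγ) / (2 * π * (σ + 1)) - 1 / (4 * π))
      (𝓝[>] 0) atBot :=
    tendsto_atBot_add_const_right _ _ <|
      (hL.const_mul_atBot hσ).atBot_div_const (by positivity)
  have power_factor : Tendsto
      (fun ω => (-(Real.log (Real.sqrt ω / 2) + euγ) / (2 * π * β)) ^ (1 / σ))
      (𝓝[>] 0) atTop :=
    (tendsto_rpow_atTop (by positivity)).comp <|
      (tendsto_neg_atBot_atTop.comp hL).atTop_div_const (by positivity)
  exact affine_factor.atBot_mul_atTop₀ power_factor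
end
end
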